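/- Every finitely generated nilpotent group is Hopfian. -/

import Mathlib

/-!
Induct on the length of the lower central series. If `γ (n + 1) = 1`, then `N = γ n` is central,
and a surjective endomorphism `φ` maps it onto itself. By induction on `i`, `γ (i + 1)` is
normally generated modulo `γ (i + 2)` by the commutators `⁅t, s⁆` of the generators `t` of `γ i`
modulo `γ (i + 1)` with the generators `s` of `G`, so `N` is a finitely generated abelian group,
i.e. a Noetherian `ℤ`-module, on which `φ` is injective. The map induced on `G ⧸ N` is injective
by induction, and the two injectivities combine.
-/

open Subgroup
open scoped commutatorElement

def Group.IsHopfian (G : Type*) [Group G] : Prop :=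
  ∀ φ : G →* G, Function.Surjective φ → Function.Injective φ

theorem CommGroup.isHopfian_of_fg (A : Type*) [CommGroup A] [Group.FG A] :
    Group.IsHopfian A := by
  intro ψ hψ
  have : Module.Finite ℤ (Additive A) := Module.Finite.iff_addGroup_fg.mpr inferInstance
  exact OrzechProperty.injective_of_surjective_endomorphism
    (MonoidHom.toAdditive ψ).toIntLinearMap hψ

section

variable {G : Type*} [Group G]

theorem Group.IsHopfian.of_normal (N : Subgroup G) [N.Normal]
    (hN : ∀ φ : G →* G, Function.Surjective φ → N.map φ = N)
    (hNH : Group.IsHopfian N) (hQH : Group.IsHopfian (G ⧸ N)) : Group.IsHopfian G := by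
  intro φ hφ
  have hmap := hN φ hφ
  let ψ : N →* N := (MulEquiv.subgroupCongr hmap).toMonoidHom.comp (φ.subgroupMap N)
  have hψ : Function.Injective ψ :=
    hNH ψ ((MulEquiv.surjective (MulEquiv.subgroupCongr hmap)).comp (φ.subgroupMap_surjective N))
  have hle : N ≤ N.comap φ := map_le_iff_le_comap.mp hmap.le
  have hφbar : Function.Injective (QuotientGroup.map N N φ hle) :=
    hQH _ (QuotientGroup.map_surjective_of_surjective (N := N) N φ
      (QuotientGroup.mk_surjective.comp hφ) hle)
  rw [injective_iff_map_eq_one]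
  intro a ha
  have haN : a ∈ N := by
    rw [← QuotientGroup.eq_one_iff]
    apply hφbar
    rw [map_one, ← QuotientGroup.mk'_apply, QuotientGroup.map_mk', ha, QuotientGroup.mk_one]
  have hψa : ψ ⟨a, haN⟩ = 1 := Subtype.ext ha
  exact congrArg Subtype.val ((injective_iff_map_eq_one ψ).mp hψ _ hψa)

theorem Subgroup.normal_of_le_center {H : Subgroup G} (h : H ≤ center G) : H.Normal where
  conj_mem n hn g := by rwa [mem_center_iff.mp (h hn) g, mul_inv_cancel_right]

/-- Modulo the right-hand side, `N` is central, and so is `T` because it commutes with the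
generators `S`; hence `H` is central there too. -/
theorem commutator_top_le_sup_normalClosure {S T : Set G} (hS : closure S = ⊤)
    {H N : Subgroup G} [N.Normal] (hH : H ≤ N ⊔ normalClosure T) :
    ⁅H, ⊤⁆ ≤ ⁅N, ⊤⁆ ⊔ normalClosure (Set.image2 (⁅·, ·⁆) T S) := by
  set M := ⁅N, ⊤⁆ ⊔ normalClosure (Set.image2 (⁅·, ·⁆) T S)
  set π := QuotientGroup.mk' M
  have hπ : Function.Surjective π := QuotientGroup.mk'_surjective M
  have hN : N.map π ≤ center (G ⧸ M) := by
    rw [← commutator_top_right_eq_bot_iff_le_center, ← map_top_of_surjective π hπ,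
      ← map_commutator, Subgroup.map_eq_bot_iff, QuotientGroup.ker_mk']
    exact le_sup_left
  have hT : π '' T ⊆ center (G ⧸ M) := by
    rintro _ ⟨t, ht, rfl⟩
    have hcent : closure (π '' S) ≤ centralizer {π t} := by
      rw [closure_le]
      rintro _ ⟨s, hs, rfl⟩
      have hts : ⁅t, s⁆ ∈ M := mem_sup_right (subset_normalClosure ⟨t, ht, s, hs, rfl⟩)
      rw [SetLike.mem_coe, mem_centralizer_singleton_iff, eq_comm,
        ← commutatorElement_eq_one_iff_mul_comm, ← map_commutatorElement]
      exact (QuotientGroup.eq_one_iff _).mpr hts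
    rw [← MonoidHom.map_closure, hS, map_top_of_surjective π hπ, top_le_iff,
      centralizer_eq_top_iff_subset, Set.singleton_subset_iff] at hcent
    exact hcent
  have hH : H.map π ≤ center (G ⧸ M) := by
    refine (map_mono hH).trans ?_
    rw [Subgroup.map_sup, map_normalClosure T π hπ]
    exact sup_le hN (normalClosure_le_normal hT)
  rw [← QuotientGroup.ker_mk' M, ← Subgroup.map_eq_bot_iff, map_commutator,
    map_top_of_surjective π hπ, commutator_top_right_eq_bot_iff_le_center]
  exact hH

theorem exists_finite_lowerCentralSeries_le_sup_normalClosure [Group.FG G] (n : ℕ) :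
    ∃ T : Set G, T.Finite ∧ T ⊆ (⊤ : Subgroup G).lowerCentralSeries n ∧
      (⊤ : Subgroup G).lowerCentralSeries n ≤
        (⊤ : Subgroup G).lowerCentralSeries (n + 1) ⊔ normalClosure T := by
  obtain ⟨S, hS, hSfin⟩ := Group.fg_iff.mp ‹Group.FG G›
  induction n with
  | zero =>
    refine ⟨S, hSfin, Set.subset_univ S, ?_⟩
    rw [Subgroup.lowerCentralSeries_zero, ← hS]
    exact closure_le_normalClosure.trans le_sup_right
  | succ n ih =>
    obtain ⟨T, hTfin, hT, hle⟩ := ih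
    refine ⟨Set.image2 (⁅·, ·⁆) T S, hTfin.image2 _ hSfin, ?_,
      commutator_top_le_sup_normalClosure hS hle⟩
    rintro _ ⟨t, ht, s, -, rfl⟩
    exact commutator_mem_commutator (hT ht) (mem_top s)

theorem fg_lowerCentralSeries_of_succ_eq_bot [Group.FG G] {n : ℕ}
    (h : (⊤ : Subgroup G).lowerCentralSeries (n + 1) = ⊥) :
    ((⊤ : Subgroup G).lowerCentralSeries n).FG := by
  obtain ⟨T, hTfin, hT, hle⟩ := exists_finite_lowerCentralSeries_le_sup_normalClosure (G := G) n
  have hcenter : (⊤ : Subgroup G).lowerCentralSeries n ≤ center G :=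
    commutator_top_right_eq_bot_iff_le_center.mp h
  have : (closure T).Normal := normal_of_le_center ((closure_le _).mpr (hT.trans hcenter))
  refine ⟨hTfin.toFinset, le_antisymm ((closure_le _).mpr (by simpa using hT)) ?_⟩
  rw [h, bot_sup_eq] at hle
  simpa using hle.trans (normalClosure_le_normal subset_closure)

open scoped IsMulCommutative in
theorem Group.isHopfian_of_lowerCentralSeries_eq_bot [Group.FG G] {n : ℕ}
    (h : (⊤ : Subgroup G).lowerCentralSeries n = ⊥) : Group.IsHopfian G := by
  induction n generalizing G with
  | zero =>
    have h : (⊤ : Subgroup G) = ⊥ := h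
    have hG : ∀ g : G, g = 1 := fun g => mem_bot.mp (h ▸ mem_top g)
    exact fun _ _ a b _ => (hG a).trans (hG b).symm
  | succ n ih =>
    set N := (⊤ : Subgroup G).lowerCentralSeries n
    have : Group.FG N := (Group.fg_iff_subgroup_fg N).mpr (fg_lowerCentralSeries_of_succ_eq_bot h)
    have : IsMulCommutative N := le_centralizer_iff_isMulCommutative.mp
      ((commutator_top_right_eq_bot_iff_le_center.mp h).trans (center_le_centralizer (N : Set G)))
    refine Group.IsHopfian.of_normal N (fun φ hφ => ?_) (CommGroup.isHopfian_of_fg N) (ih ?_)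
    · rw [map_lowerCentralSeries, map_top_of_surjective φ hφ]
    · rw [← map_top_of_surjective _ (QuotientGroup.mk'_surjective N), ← map_lowerCentralSeries,
        Subgroup.map_eq_bot_iff, QuotientGroup.ker_mk']

end

/-- Every finitely generated nilpotent group is Hopfian: every surjective
endomorphism is an isomorphism. -/
theorem fg_nilpotent_hopfian (G : Type*) [Group G] [Group.FG G] [Group.IsNilpotent G]
    (φ : G →* G) (hφ : Function.Surjective φ) : Function.Bijective φ := by
  obtain ⟨n, hn⟩ := Subgroup.nilpotent_iff_lowerCentralSeries.mp ‹Group.IsNilpotent G›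
  exact ⟨Group.isHopfian_of_lowerCentralSeries_eq_bot hn φ hφ, hφ⟩
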